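/- arXiv:2402.19067 — 2 statements merged into one kernel-verified Lean document; each statement's English description precedes it below -/
import Mathlib

section
/- If Y is a locally AMUC Banach space, then for every y in the unit sphere S_Y and every t > 0 there exists δ > 0 such that limsup_n max{‖y + t z_n‖, ‖y − t z_n‖} ≥ 1 + δ for every weakly null sequence (z_n) in Y satisfying ‖z_n‖ ≥ 1 for every n ∈ ℕ. -/
/-!
Positivity of `δ̃_Y(y,t)` provides a closed finite-codimensional subspace `E` and `r > 0` with
`max ‖y + t u‖ ‖y - t u‖ ≥ 1 + r` on the unit sphere of `E`. A weakly null sequence `(zₙ)` is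
bounded by the uniform boundedness principle, and its image in the finite-dimensional quotient
`Y ⧸ E` tends to `0` in norm, i.e. `dist (zₙ, E) → 0`. As `s ↦ max ‖y + s w‖ ‖y - s w‖` is even
and convex, hence nondecreasing on `[0, ∞)`, we may replace `zₙ` by `zₙ / ‖zₙ‖`, which lies within
`2 dist (zₙ, E)` of a unit vector of `E`; the maximum is `t`-Lipschitz in that vector, so it is
eventually at least `1 + r / 2`.
-/

open Filter Topology

/-- The asymptotic midpoint modulus `δ̃_Y(y,t)`: the supremum, over all closed
finite-codimensional subspaces `E` of `Y`, of
`inf_{z ∈ S_E} max {‖y + t z‖, ‖y - t z‖} - 1`. -/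
noncomputable def deltaTilde (Y : Type*) [NormedAddCommGroup Y] [NormedSpace ℝ Y]
    (y : Y) (t : ℝ) : ℝ :=
  sSup {r : ℝ | ∃ E : Submodule ℝ Y, IsClosed (E : Set Y) ∧ FiniteDimensional ℝ (Y ⧸ E) ∧
    r = sInf {m : ℝ | ∃ z : Y, z ∈ E ∧ ‖z‖ = 1 ∧ m = max ‖y + t • z‖ ‖y - t • z‖} - 1}

/-- A Banach space `Y` is locally asymptotically midpoint uniformly convex (locally AMUC)
if `δ̃_Y(y,t) > 0` for every `y ∈ S_Y` and every `t > 0`. -/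
def LocallyAMUC (Y : Type*) [NormedAddCommGroup Y] [NormedSpace ℝ Y] : Prop :=
  ∀ y : Y, ‖y‖ = 1 → ∀ t : ℝ, 0 < t → 0 < deltaTilde Y y t

open Metric

theorem tendsto_of_forall_dual_tendsto {𝕜 V ι : Type*} [NontriviallyNormedField 𝕜]
    [CompleteSpace 𝕜] [AddCommGroup V] [Module 𝕜 V] [TopologicalSpace V]
    [IsTopologicalAddGroup V] [ContinuousSMul 𝕜 V] [T2Space V] [FiniteDimensional 𝕜 V]
    {l : Filter ι} {v : ι → V} {a : V}
    (h : ∀ f : V →L[𝕜] 𝕜, Tendsto (fun i => f (v i)) l (𝓝 (f a))) :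
    Tendsto v l (𝓝 a) := by
  let e := (Module.finBasis 𝕜 V).equivFun.toContinuousLinearEquiv
  have hcoord : Tendsto (fun i => e (v i)) l (𝓝 (e a)) :=
    tendsto_pi_nhds.2 fun j => by
      simpa using h ((ContinuousLinearMap.proj (R := 𝕜) (φ := fun _ => 𝕜) j).comp
        e.toContinuousLinearMap)
  simpa [Function.comp_def] using (e.symm.continuous.tendsto (e a)).comp hcoord

theorem tendsto_infDist_of_forall_dual_tendsto_zero {𝕜 Y ι : Type*}
    [NontriviallyNormedField 𝕜] [CompleteSpace 𝕜] [NormedAddCommGroup Y] [NormedSpace 𝕜 Y]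
    {E : Submodule 𝕜 Y} [IsClosed (E : Set Y)] [FiniteDimensional 𝕜 (Y ⧸ E)]
    {l : Filter ι} {z : ι → Y} (hz : ∀ f : Y →L[𝕜] 𝕜, Tendsto (fun i => f (z i)) l (𝓝 0)) :
    Tendsto (fun i => infDist (z i) E) l (𝓝 0) := by
  have hq : Tendsto (fun i => E.mkQL (z i)) l (𝓝 0) :=
    tendsto_of_forall_dual_tendsto fun f : Y ⧸ E →L[𝕜] 𝕜 => by
      rw [map_zero]
      exact hz (f.comp E.mkQL)
  have hnorm (x : Y) : ‖E.mkQL x‖ = infDist x E :=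
    QuotientAddGroup.norm_mk (S := E.toAddSubgroup) x
  simpa only [hnorm, norm_zero] using hq.norm

theorem exists_norm_le_of_forall_dual_bounded {𝕜 Y ι : Type*} [RCLike 𝕜]
    [NormedAddCommGroup Y] [NormedSpace 𝕜 Y] {z : ι → Y}
    (h : ∀ f : Y →L[𝕜] 𝕜, ∃ C, ∀ i, ‖f (z i)‖ ≤ C) : ∃ C, ∀ i, ‖z i‖ ≤ C := by
  obtain ⟨C, hC⟩ :=
    banach_steinhaus (g := fun i => NormedSpace.inclusionInDoubleDual 𝕜 Y (z i)) h
  exact ⟨C, fun i => (NormedSpace.inclusionInDoubleDualLi 𝕜).norm_map (z i) ▸ hC i⟩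

theorem max_norm_add_sub_le_add_norm_sub {Y : Type*} [SeminormedAddCommGroup Y] (y u v : Y) :
    max ‖y + u‖ ‖y - u‖ ≤ max ‖y + v‖ ‖y - v‖ + ‖u - v‖ := by
  have h₁ : ‖y + u‖ ≤ ‖y + v‖ + ‖u - v‖ := by
    simpa using norm_le_norm_add_norm_sub' (y + u) (y + v)
  have h₂ : ‖y - u‖ ≤ ‖y - v‖ + ‖u - v‖ := by
    simpa [norm_sub_rev u v] using norm_le_norm_add_norm_sub' (y - u) (y - v)
  exact max_le (h₁.trans (by gcongr; exact le_max_left _ _))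
    (h₂.trans (by gcongr; exact le_max_right _ _))

section Real

variable {Y : Type*} [NormedAddCommGroup Y] [NormedSpace ℝ Y]

theorem norm_add_smul_le_max_norm_add_sub {a : ℝ} (y w : Y) (ha₀ : 0 ≤ a) (ha₁ : a ≤ 1) :
    ‖y + a • w‖ ≤ max ‖y + w‖ ‖y - w‖ := by
  have hcomb : y + a • w = ((1 + a) / 2) • (y + w) + ((1 - a) / 2) • (y - w) := by module
  rw [hcomb]
  exact convexOn_univ_norm.le_on_segment' trivial trivial (by linarith) (by linarith) (by ring)

theorem max_norm_add_sub_smul_le {a : ℝ} (y w : Y) (ha₀ : 0 ≤ a) (ha₁ : a ≤ 1) :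
    max ‖y + a • w‖ ‖y - a • w‖ ≤ max ‖y + w‖ ‖y - w‖ := by
  refine max_le (norm_add_smul_le_max_norm_add_sub y w ha₀ ha₁) ?_
  simpa [sub_eq_add_neg, max_comm] using norm_add_smul_le_max_norm_add_sub y (-w) ha₀ ha₁

theorem norm_normalize_sub_normalize_le {x : Y} (hx : x ≠ 0) (e : Y) :
    ‖NormedSpace.normalize x - NormedSpace.normalize e‖ ≤ 2 * ‖x - e‖ / ‖x‖ := by
  have hsplit : ‖x‖ • (NormedSpace.normalize x - NormedSpace.normalize e) =
      (x - e) + (‖e‖ - ‖x‖) • NormedSpace.normalize e := by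
    rw [smul_sub, sub_smul, NormedSpace.norm_smul_normalize, NormedSpace.norm_smul_normalize]
    abel
  have hunit : ‖NormedSpace.normalize e‖ ≤ 1 := by
    rcases eq_or_ne e 0 with rfl | he
    · simp
    · exact (NormedSpace.norm_normalize he).le
  rw [le_div_iff₀ (norm_pos_iff.2 hx)]
  calc ‖NormedSpace.normalize x - NormedSpace.normalize e‖ * ‖x‖
        = ‖(x - e) + (‖e‖ - ‖x‖) • NormedSpace.normalize e‖ := by
        rw [← hsplit, norm_smul, norm_norm, mul_comm]
    _ ≤ ‖x - e‖ + |‖e‖ - ‖x‖| * ‖NormedSpace.normalize e‖ := by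
        simpa [norm_smul] using norm_add_le (x - e) ((‖e‖ - ‖x‖) • NormedSpace.normalize e)
    _ ≤ ‖x - e‖ + ‖x - e‖ * 1 := by
        gcongr
        simpa [norm_sub_rev] using abs_norm_sub_norm_le e x
    _ = 2 * ‖x - e‖ := by ring

theorem le_max_norm_add_sub_of_norm_sub_lt_one {E : Submodule ℝ Y} {y x e : Y} {t r : ℝ}
    (hE : ∀ u ∈ E, ‖u‖ = 1 → 1 + r ≤ max ‖y + t • u‖ ‖y - t • u‖) (ht : 0 ≤ t)
    (hx : 1 ≤ ‖x‖) (he : e ∈ E) (hxe : ‖x - e‖ < 1) :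
    1 + r - 2 * t * ‖x - e‖ ≤ max ‖y + t • x‖ ‖y - t • x‖ := by
  have hx₀ : x ≠ 0 := norm_pos_iff.1 (by linarith)
  have he₀ : e ≠ 0 := by
    rintro rfl
    rw [sub_zero] at hxe
    linarith
  have hclose : ‖NormedSpace.normalize x - NormedSpace.normalize e‖ ≤ 2 * ‖x - e‖ :=
    (norm_normalize_sub_normalize_le hx₀ e).trans (div_le_self (by positivity) hx)
  have hunit :=
    hE (NormedSpace.normalize e) (E.smul_mem _ he) (NormedSpace.norm_normalize he₀)
  have hlip := max_norm_add_sub_le_add_norm_sub y (t • NormedSpace.normalize e)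
    (t • NormedSpace.normalize x)
  rw [← smul_sub, norm_smul, Real.norm_of_nonneg ht,
    norm_sub_rev (NormedSpace.normalize e)] at hlip
  have hmono : max ‖y + t • NormedSpace.normalize x‖ ‖y - t • NormedSpace.normalize x‖ ≤
      max ‖y + t • x‖ ‖y - t • x‖ := by
    rw [NormedSpace.normalize, smul_comm]
    exact max_norm_add_sub_smul_le y (t • x) (by positivity) (inv_le_one_of_one_le₀ hx)
  linarith [mul_le_mul_of_nonneg_left hclose ht]

theorem exists_subspace_of_deltaTilde_pos {y : Y} {t : ℝ} (h : 0 < deltaTilde Y y t) :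
    ∃ E : Submodule ℝ Y, IsClosed (E : Set Y) ∧ FiniteDimensional ℝ (Y ⧸ E) ∧
      ∃ r > 0, ∀ u ∈ E, ‖u‖ = 1 → 1 + r ≤ max ‖y + t • u‖ ‖y - t • u‖ := by
  rw [deltaTilde] at h
  have hpos := mt Real.sSup_nonpos h.not_ge
  push Not at hpos
  obtain ⟨_, ⟨E, hE, hfin, rfl⟩, hr⟩ := hpos
  refine ⟨E, hE, hfin, _, hr, fun u hu hu₁ => ?_⟩
  have hbdd : BddBelow {m : ℝ | ∃ z : Y, z ∈ E ∧ ‖z‖ = 1 ∧ m = max ‖y + t • z‖ ‖y - t • z‖} :=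
    ⟨0, by rintro _ ⟨z, -, -, rfl⟩; positivity⟩
  linarith [csInf_le hbdd ⟨u, hu, hu₁, rfl⟩]

end Real

theorem locallyAMUC_limsup_general (Y : Type*) [NormedAddCommGroup Y] [NormedSpace ℝ Y]
    (hY : LocallyAMUC Y) :
    ∀ y : Y, ‖y‖ = 1 → ∀ t : ℝ, 0 < t → ∃ δ : ℝ, 0 < δ ∧
      ∀ z : ℕ → Y,
        (∀ f : Y →L[ℝ] ℝ, Tendsto (fun n => f (z n)) atTop (𝓝 0)) →
        (∀ n : ℕ, 1 ≤ ‖z n‖) →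
        1 + δ ≤ limsup (fun n => max ‖y + t • z n‖ ‖y - t • z n‖) atTop := by
  intro y hy t ht
  obtain ⟨E, hE, hfin, r, hr, hEr⟩ := exists_subspace_of_deltaTilde_pos (hY y hy t ht)
  refine ⟨r / 2, half_pos hr, fun z hz hz₁ => ?_⟩
  obtain ⟨C, hC⟩ := exists_norm_le_of_forall_dual_bounded fun f =>
    let ⟨C, hC⟩ := (hz f).norm.bddAbove_range
    ⟨C, fun n => hC ⟨n, rfl⟩⟩
  have hbdd : IsBoundedUnder (· ≤ ·) atTop fun n => max ‖y + t • z n‖ ‖y - t • z n‖ :=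
    isBoundedUnder_of ⟨‖y‖ + t * C, fun n => (max_le (norm_add_le _ _) (norm_sub_le _ _)).trans
      (by rw [norm_smul, Real.norm_of_nonneg ht.le]; gcongr; exact hC n)⟩
  have hε : 0 < min 1 (r / (4 * t)) := by positivity
  refine le_limsup_of_frequently_le (Eventually.frequently ?_) hbdd
  have hdist := tendsto_infDist_of_forall_dual_tendsto_zero (E := E) hz
  filter_upwards [hdist.eventually_lt_const hε] with n hn
  obtain ⟨e, he, hze⟩ := (infDist_lt_iff ⟨0, E.zero_mem⟩).1 hn
  rw [dist_eq_norm, lt_min_iff, lt_div_iff₀ (by positivity)] at hze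
  linarith [le_max_norm_add_sub_of_norm_sub_lt_one hEr ht.le (hz₁ n) he hze.1]

/-- If `Y` is locally AMUC, then for every `y ∈ S_Y` and `t > 0` there is
`δ > 0` with `limsup max {‖y + t zₙ‖, ‖y - t zₙ‖} ≥ 1 + δ` for every weakly null
sequence `(zₙ)` with `‖zₙ‖ ≥ 1` for all `n`. -/
theorem locallyAMUC_limsup (Y : Type*) [NormedAddCommGroup Y] [NormedSpace ℝ Y]
    [CompleteSpace Y] (hY : LocallyAMUC Y) :
    ∀ y : Y, ‖y‖ = 1 → ∀ t : ℝ, 0 < t → ∃ δ : ℝ, 0 < δ ∧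
      ∀ z : ℕ → Y,
        (∀ f : Y →L[ℝ] ℝ, Tendsto (fun n => f (z n)) atTop (𝓝 0)) →
        (∀ n : ℕ, 1 ≤ ‖z n‖) →
        1 + δ ≤ limsup (fun n => max ‖y + t • z n‖ ‖y - t • z n‖) atTop :=
  locallyAMUC_limsup_general Y hY
end

section
/- Let w be an admissible sequence and let d_*(w) be the associated predual of a Lorentz sequence space. For every x in the unit sphere of d_*(w), there exist m ∈ ℕ and δ ∈ (0,1) such that ‖x + λ e_n‖ ≤ 1 for every n ≥ m and every scalar λ with |λ| ≤ δ. -/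
open Filter Topology

/-- `rearrSum x n = ∑_{k=1}^n x̃_k`, the sum of the `n` largest values of `(|x_k|)`,
i.e. the `n`-th partial sum of the nonincreasing rearrangement of `(|x_k|)`; it is the
supremum of `∑_{k ∈ A} |x_k|` over finite sets `A ⊆ ℕ` of cardinality `n`. -/
noncomputable def rearrSum (x : ℕ → ℝ) (n : ℕ) : ℝ :=
  sSup ((fun A : Finset ℕ => ∑ k ∈ A, |x k|) '' {A : Finset ℕ | A.card = n})

/-- A sequence of positive reals is admissible if it is nonincreasing, starts at `1`,
tends to `0` and is not summable. -/
def Admissible (w : ℕ → ℝ) : Prop :=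
  (∀ n, 0 < w n) ∧ (∀ n, w (n + 1) ≤ w n) ∧ w 0 = 1 ∧
    Tendsto w atTop (𝓝 0) ∧ ¬ Summable w

/-- The underlying set of sequences of `d_*(w)`: sequences `x ∈ c₀` with
`(∑_{k=1}^n x̃_k) / (∑_{k=1}^n w_k) → 0`. -/
def dStarSet (w : ℕ → ℝ) : Set (ℕ → ℝ) :=
  {x | Tendsto x atTop (𝓝 0) ∧
    Tendsto (fun n => rearrSum x n / ∑ k ∈ Finset.range n, w k) atTop (𝓝 0)}

/-- The norm of `d_*(w)`: `‖x‖ = sup_n (∑_{k=1}^n x̃_k) / (∑_{k=1}^n w_k)`. -/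
noncomputable def dStarNorm (w : ℕ → ℝ) (x : ℕ → ℝ) : ℝ :=
  ⨆ n : ℕ, rearrSum x n / ∑ k ∈ Finset.range n, w k

/-- A normed space `D` is a representation of `d_*(w)` if there is a linear bijection `j`
from `D` onto the set of sequences of `d_*(w)` carrying the norm of `D` to the norm of
`d_*(w)`; i.e. `D` "is" the space `d_*(w)` endowed with its canonical norm. -/
def IsDStarRep (w : ℕ → ℝ) (D : Type*) [NormedAddCommGroup D] [NormedSpace ℝ D]
    (j : D →ₗ[ℝ] (ℕ → ℝ)) : Prop :=
  Function.Injective j ∧ Set.range j = dStarSet w ∧ ∀ x : D, ‖x‖ = dStarNorm w (j x)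

/-! Write `W j = ∑_{k<j} w k`, so `W j ≥ w 0 = 1` for `j ≥ 1` and `‖x‖ ≤ 1` means
`rearrSum x j ≤ W j` for all `j`. Changing the coordinate `n` of `x` by `λ` adds at most `|λ|` to
`rearrSum x j`, and a set of `j` indices containing `n` carries at most
`|x n + λ| + rearrSum x (j - 1)`. As `rearrSum x j / W j → 0`, there is `N` with
`rearrSum x j ≤ W j / 2` for `j > N`, where `|λ| ≤ 1/2` is absorbed. For `j ≤ N + 1`, take `n` so
late that `|x n| ≤ w N / 2`; then `|λ| ≤ δ = w N / 2` keeps the new coordinate below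
`w N ≤ w (j - 1)`, and `W (j - 1) + w (j - 1) = W j`. -/

lemma rearrSum_zero (x : ℕ → ℝ) : rearrSum x 0 = 0 := by
  simp [rearrSum]

lemma rearrSum_le {x : ℕ → ℝ} {n : ℕ} {a : ℝ}
    (h : ∀ A : Finset ℕ, A.card = n → ∑ k ∈ A, |x k| ≤ a) : rearrSum x n ≤ a := by
  refine csSup_le ⟨_, Finset.range n, Finset.card_range n, rfl⟩ ?_
  rintro _ ⟨A, hA, rfl⟩
  exact h A hA

lemma sum_abs_le_rearrSum {x : ℕ → ℝ} (hx : BddAbove (Set.range fun k => |x k|))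
    (A : Finset ℕ) : ∑ k ∈ A, |x k| ≤ rearrSum x A.card := by
  obtain ⟨B, hB⟩ := hx
  refine le_csSup ⟨A.card * B, ?_⟩ ⟨A, rfl, rfl⟩
  rintro _ ⟨C, hC, rfl⟩
  calc ∑ k ∈ C, |x k| ≤ ∑ k ∈ C, B := Finset.sum_le_sum fun k _ => hB ⟨k, rfl⟩
    _ = A.card * B := by rw [Finset.sum_const, hC, nsmul_eq_mul]

section ChangeOneCoordinate

variable {x y : ℕ → ℝ} {n : ℕ}

lemma sum_abs_eq_of_notMem (hy : ∀ k ≠ n, y k = x k) {A : Finset ℕ} (hn : n ∉ A) :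
    ∑ k ∈ A, |y k| = ∑ k ∈ A, |x k| :=
  Finset.sum_congr rfl fun k hk => by rw [hy k (ne_of_mem_of_not_mem hk hn)]

lemma sum_abs_eq_of_mem (hy : ∀ k ≠ n, y k = x k) {A : Finset ℕ} (hn : n ∈ A) :
    ∑ k ∈ A, |y k| = |y n| + ∑ k ∈ A.erase n, |x k| := by
  rw [← Finset.add_sum_erase A _ hn, sum_abs_eq_of_notMem hy (A.notMem_erase n)]

lemma rearrSum_le_add_abs_sub (hx : BddAbove (Set.range fun k => |x k|))
    (hy : ∀ k ≠ n, y k = x k) (j : ℕ) : rearrSum y j ≤ rearrSum x j + |y n - x n| := by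
  refine rearrSum_le fun A hA => ?_
  have hxA := hA ▸ sum_abs_le_rearrSum hx A
  by_cases hn : n ∈ A
  · have hyn : |y n| ≤ |x n| + |y n - x n| := by
      simpa using abs_add_le (x n) (y n - x n)
    rw [sum_abs_eq_of_mem hy hn]
    rw [← Finset.add_sum_erase A _ hn] at hxA
    linarith
  · rw [sum_abs_eq_of_notMem hy hn]
    linarith [abs_nonneg (y n - x n)]

lemma rearrSum_succ_le_max (hx : BddAbove (Set.range fun k => |x k|))
    (hy : ∀ k ≠ n, y k = x k) (i : ℕ) :
    rearrSum y (i + 1) ≤ max (rearrSum x (i + 1)) (|y n| + rearrSum x i) := by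
  refine rearrSum_le fun A hA => ?_
  by_cases hn : n ∈ A
  · have hcard : (A.erase n).card = i := by rw [Finset.card_erase_of_mem hn, hA]; rfl
    rw [sum_abs_eq_of_mem hy hn]
    exact le_max_of_le_right (add_le_add le_rfl (hcard ▸ sum_abs_le_rearrSum hx _))
  · rw [sum_abs_eq_of_notMem hy hn]
    exact le_max_of_le_left (hA ▸ sum_abs_le_rearrSum hx A)

variable {w : ℕ → ℝ}

lemma rearrSum_succ_le_sum_range (hx : BddAbove (Set.range fun k => |x k|))
    (hy : ∀ k ≠ n, y k = x k) (hx_le : ∀ j, rearrSum x j ≤ ∑ k ∈ Finset.range j, w k) {i : ℕ}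
    (hyn : |y n| ≤ w i) : rearrSum y (i + 1) ≤ ∑ k ∈ Finset.range (i + 1), w k := by
  refine (rearrSum_succ_le_max hx hy i).trans (max_le (hx_le _) ?_)
  rw [Finset.sum_range_succ]
  linarith [hx_le i]

end ChangeOneCoordinate

section Norm

variable {w : ℕ → ℝ}

lemma sum_range_pos (hw : ∀ k, 0 < w k) {j : ℕ} (hj : j ≠ 0) : 0 < ∑ k ∈ Finset.range j, w k :=
  Finset.sum_pos (fun k _ => hw k) (Finset.nonempty_range_iff.2 hj)

lemma rearrSum_le_of_dStarNorm_le (hw : ∀ k, 0 < w k) {x : ℕ → ℝ} (hx : x ∈ dStarSet w) {c : ℝ}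
    (hc : dStarNorm w x ≤ c) (j : ℕ) : rearrSum x j ≤ c * ∑ k ∈ Finset.range j, w k := by
  rcases eq_or_ne j 0 with rfl | hj
  · simp [rearrSum_zero]
  rw [← div_le_iff₀ (sum_range_pos hw hj)]
  exact (le_ciSup hx.2.bddAbove_range j).trans hc

lemma dStarNorm_le_of_rearrSum_le (hw : ∀ k, 0 < w k) {y : ℕ → ℝ} {c : ℝ} (hc : 0 ≤ c)
    (h : ∀ j, rearrSum y j ≤ c * ∑ k ∈ Finset.range j, w k) : dStarNorm w y ≤ c := by
  refine ciSup_le fun j => ?_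
  rcases eq_or_ne j 0 with rfl | hj
  · simpa [rearrSum_zero] using hc
  rw [div_le_iff₀ (sum_range_pos hw hj)]
  exact h j

end Norm

/-- for every `x` in the unit sphere of `d_*(w)`, there are `m ∈ ℕ` and
`δ ∈ (0,1)` such that `‖x + λ e_n‖ ≤ 1` for every `n ≥ m` and every scalar `λ` with
`|λ| ≤ δ`, where `e_n` is the `n`-th unit vector. -/
theorem dStar_extreme_point_lemma (w : ℕ → ℝ) (hw : Admissible w)
    (x : ℕ → ℝ) (hx : x ∈ dStarSet w) (hx1 : dStarNorm w x = 1) :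
    ∃ m : ℕ, ∃ δ : ℝ, 0 < δ ∧ δ < 1 ∧
      ∀ n : ℕ, m ≤ n → ∀ lam : ℝ, |lam| ≤ δ →
        dStarNorm w (x + lam • (Pi.single n 1 : ℕ → ℝ)) ≤ 1 := by
  obtain ⟨hw_pos, hw_succ, hw_zero, -, -⟩ := hw
  have hw_anti : Antitone w := antitone_nat_of_succ_le hw_succ
  have hx_abs : Tendsto (fun k => |x k|) atTop (𝓝 0) := by simpa using hx.1.abs
  have hx_le (j : ℕ) : rearrSum x j ≤ ∑ k ∈ Finset.range j, w k := by
    simpa using rearrSum_le_of_dStarNorm_le hw_pos hx hx1.le j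
  obtain ⟨N, hN⟩ := eventually_atTop.1 (hx.2.eventually_lt_const (by norm_num : (0 : ℝ) < 1 / 2))
  obtain ⟨m, hm⟩ := eventually_atTop.1 (hx_abs.eventually_lt_const (half_pos (hw_pos N)))
  have hwN : w N ≤ 1 := hw_zero ▸ hw_anti (Nat.zero_le N)
  refine ⟨m, w N / 2, half_pos (hw_pos N), by linarith, fun n hn lam hlam => ?_⟩
  set y := x + lam • (Pi.single n 1 : ℕ → ℝ)
  have hy : ∀ k ≠ n, y k = x k := fun k hk => by simp [y, hk]
  have hyn : y n = x n + lam := by simp [y]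
  refine dStarNorm_le_of_rearrSum_le hw_pos zero_le_one fun j => ?_
  rcases j with _ | i
  · simp [rearrSum_zero]
  rw [one_mul]
  rcases le_total i N with hiN | hNi
  · refine rearrSum_succ_le_sum_range hx_abs.bddAbove_range hy hx_le ?_
    linarith [hyn ▸ abs_add_le (x n) lam, hm n hn, hw_anti hiN]
  · have hW1 : 1 ≤ ∑ k ∈ Finset.range (i + 1), w k :=
      hw_zero ▸ Finset.single_le_sum (fun k _ => (hw_pos k).le) (Finset.mem_range.2 i.succ_pos)
    have hxi := hN (i + 1) (by omega)
    rw [div_lt_iff₀ (sum_range_pos hw_pos i.succ_ne_zero)] at hxi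
    have hy_le := rearrSum_le_add_abs_sub hx_abs.bddAbove_range hy (i + 1)
    rw [hyn, add_sub_cancel_left] at hy_le
    linarith
end
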